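/- For every permutation σ ∈ S_n and every n, applying the stack-sorting map s at most n−1 times to σ yields the identity permutation; equivalently, s^{n-1}(σ) = 1 2 ⋯ n. -/

import Mathlib

/-- Auxiliary fuelled version of West's stack-sorting map on words (lists of naturals
with distinct letters). The fuel always suffices when it is at least the length of
the word. -/
def ssAux : ℕ → List ℕ → List ℕ
  | 0, _ => []
  | _ + 1, [] => []
  | fuel + 1, l@(_ :: _) =>
      let m := l.foldr max 0
      let i := l.idxOf m
      ssAux fuel (l.take i) ++ ssAux fuel (l.drop (i + 1)) ++ [m]

/-- West's stack-sorting map `s` on words with distinct letters: `s(ε) = ε` and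
`s(L m R) = s(L) s(R) m`, where `m` is the largest letter of the word. -/
def ss (l : List ℕ) : List ℕ := ssAux l.length l

lemma le_foldr_max {l : List ℕ} {x : ℕ} (hx : x ∈ l) : x ≤ l.foldr max 0 := by
  induction l with
  | nil => simp at hx
  | cons a t ih =>
    rcases List.mem_cons.1 hx with h | h
    · simp [h]
    · exact le_trans (ih h) (by simp)

lemma foldr_max_mem {l : List ℕ} (hl : l ≠ []) : l.foldr max 0 ∈ l := by
  induction l with
  | nil => simp at hl
  | cons a t ih =>
    rcases eq_or_ne t [] with rfl | ht
    · simp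
    · have h0 : (a :: t).foldr max 0 = max a (t.foldr max 0) := rfl
      rw [h0]
      rcases max_choice a (t.foldr max 0) with h | h
      · rw [h]; exact List.mem_cons_self
      · rw [h]; exact List.mem_cons_of_mem _ (ih ht)

lemma ssAux_cons (f : ℕ) (a : ℕ) (t : List ℕ) :
    ssAux (f + 1) (a :: t)
      = ssAux f ((a :: t).take ((a :: t).idxOf ((a :: t).foldr max 0)))
        ++ ssAux f ((a :: t).drop ((a :: t).idxOf ((a :: t).foldr max 0) + 1))
        ++ [(a :: t).foldr max 0] := rfl

lemma ssAux_eq : ∀ fuel l, l.length ≤ fuel → ssAux fuel l = ss l := by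
  intro fuel
  induction fuel using Nat.strong_induction_on with
  | _ fuel IH =>
    intro l hl
    match fuel, l with
    | 0, l =>
      rw [List.length_eq_zero_iff.1 (Nat.le_zero.1 hl)]; rfl
    | f + 1, [] => rfl
    | f + 1, a :: t =>
      have hi : (a :: t).idxOf ((a :: t).foldr max 0) < (a :: t).length :=
        List.idxOf_lt_length_iff.2 (foldr_max_mem (by simp))
      simp only [List.length_cons] at hi hl
      have h1 : ((a :: t).take ((a :: t).idxOf ((a :: t).foldr max 0))).length ≤ t.length := by
        rw [List.length_take, List.length_cons]; omega
      have h2 : ((a :: t).drop ((a :: t).idxOf ((a :: t).foldr max 0) + 1)).length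
          ≤ t.length := by
        rw [List.length_drop, List.length_cons]; omega
      show ssAux (f + 1) (a :: t) = ssAux ((a :: t).length) (a :: t)
      rw [List.length_cons, ssAux_cons f, ssAux_cons t.length,
          IH f (by omega) _ (le_trans h1 (by omega)),
          IH f (by omega) _ (le_trans h2 (by omega)),
          IH t.length (by omega) _ h1, IH t.length (by omega) _ h2]

lemma ss_nil : ss [] = [] := rfl

lemma ss_eq (l : List ℕ) (hl : l ≠ []) :
    ss l = ss (l.take (l.idxOf (l.foldr max 0)))
        ++ ss (l.drop (l.idxOf (l.foldr max 0) + 1)) ++ [l.foldr max 0] := by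
  match l with
  | a :: t =>
    have hi : (a :: t).idxOf ((a :: t).foldr max 0) < (a :: t).length :=
      List.idxOf_lt_length_iff.2 (foldr_max_mem (by simp))
    simp only [List.length_cons] at hi
    show ssAux ((a :: t).length) (a :: t) = _
    rw [List.length_cons, ssAux_cons,
        ssAux_eq _ _ (by rw [List.length_take, List.length_cons]; omega),
        ssAux_eq _ _ (by rw [List.length_drop, List.length_cons]; omega)]

lemma decomp (l : List ℕ) (hl : l ≠ []) :
    l = l.take (l.idxOf (l.foldr max 0))
        ++ l.foldr max 0 :: l.drop (l.idxOf (l.foldr max 0) + 1) := by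
  have hm : l.foldr max 0 ∈ l := foldr_max_mem hl
  have hi : l.idxOf (l.foldr max 0) < l.length := List.idxOf_lt_length_iff.2 hm
  conv_lhs => rw [← List.take_append_drop (l.idxOf (l.foldr max 0)) l]
  rw [List.drop_eq_getElem_cons hi, List.getElem_idxOf hi]

lemma ss_perm : ∀ N l, l.length ≤ N → List.Perm (ss l) l := by
  intro N
  induction N with
  | zero =>
    intro l hl
    rw [List.length_eq_zero_iff.1 (Nat.le_zero.1 hl)]
    exact ss_nil ▸ List.Perm.refl []
  | succ N IH =>
    intro l hl
    rcases eq_or_ne l [] with rfl | hne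
    · exact ss_nil ▸ List.Perm.refl []
    have hi : l.idxOf (l.foldr max 0) < l.length :=
      List.idxOf_lt_length_iff.2 (foldr_max_mem hne)
    rw [ss_eq l hne]
    have hL : (l.take (l.idxOf (l.foldr max 0))).length ≤ N := by
      rw [List.length_take]; omega
    have hR : (l.drop (l.idxOf (l.foldr max 0) + 1)).length ≤ N := by
      rw [List.length_drop]; omega
    have p1 : List.Perm
        (ss (l.take (l.idxOf (l.foldr max 0))) ++ ss (l.drop (l.idxOf (l.foldr max 0) + 1))
          ++ [l.foldr max 0])
        (l.take (l.idxOf (l.foldr max 0)) ++ l.drop (l.idxOf (l.foldr max 0) + 1)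
          ++ [l.foldr max 0]) :=
      ((IH _ hL).append (IH _ hR)).append (List.Perm.refl _)
    have p2 : List.Perm
        (l.take (l.idxOf (l.foldr max 0)) ++ l.drop (l.idxOf (l.foldr max 0) + 1)
          ++ [l.foldr max 0])
        (l.take (l.idxOf (l.foldr max 0))
          ++ (l.foldr max 0 :: l.drop (l.idxOf (l.foldr max 0) + 1))) := by
      rw [List.append_assoc]
      exact List.Perm.append_left _ (List.perm_append_singleton _ _)
    exact (p1.trans p2).trans (List.Perm.refl _ |>.trans (by rw [← decomp l hne]))

lemma ss_perm' (l : List ℕ) : List.Perm (ss l) l := ss_perm l.length l le_rfl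

lemma ss_iterate_perm (k : ℕ) (l : List ℕ) : List.Perm (ss^[k] l) l := by
  induction k with
  | zero => rfl
  | succ k ih => rw [Function.iterate_succ_apply']; exact (ss_perm' _).trans ih

lemma foldr_max_of_le {u : List ℕ} {m : ℕ} (h : ∀ x ∈ u, x ≤ m) : u.foldr max m = m := by
  induction u with
  | nil => rfl
  | cons a t ih =>
    simp only [List.foldr_cons]
    rw [ih (fun x hx => h x (List.mem_cons_of_mem _ hx))]
    exact max_eq_right (h a (List.mem_cons_self))

lemma ss_append_max {u : List ℕ} {m : ℕ} (h : ∀ x ∈ u, x < m) :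
    ss (u ++ [m]) = ss u ++ [m] := by
  have hmax : (u ++ [m]).foldr max 0 = m := by
    rw [List.foldr_append]
    simp only [List.foldr_cons, List.foldr_nil, Nat.max_zero]
    exact foldr_max_of_le (fun x hx => le_of_lt (h x hx))
  have hnm : m ∉ u := fun hm => lt_irrefl m (h m hm)
  have hidx : (u ++ [m]).idxOf m = u.length := by
    rw [List.idxOf_append_of_notMem hnm]; simp
  rw [ss_eq (u ++ [m]) (by simp), hmax, hidx]
  rw [List.take_left, List.drop_eq_nil_of_le (by simp), ss_nil]
  simp

lemma ss_iter_append_max {m : ℕ} (k : ℕ) :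
    ∀ u : List ℕ, (∀ x ∈ u, x < m) → ss^[k] (u ++ [m]) = ss^[k] u ++ [m] := by
  induction k with
  | zero => intro u h; rfl
  | succ k ih =>
    intro u h
    rw [Function.iterate_succ_apply, Function.iterate_succ_apply,
        ss_append_max h, ih (ss u) (fun x hx => h x ((ss_perm' u).mem_iff.1 hx))]

lemma main_sorted : ∀ N l, l.length ≤ N → l.Nodup → ∀ k, l.length - 1 ≤ k →
    (ss^[k] l).Pairwise (· ≤ ·) := by
  intro N
  induction N with
  | zero =>
    intro l hl _ k _
    rw [List.length_eq_zero_iff.1 (Nat.le_zero.1 hl), Function.iterate_fixed ss_nil]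
    exact List.Pairwise.nil
  | succ N IH =>
    intro l hl hnd k hk
    rcases eq_or_ne l [] with rfl | hne
    · rw [Function.iterate_fixed ss_nil]; exact List.Pairwise.nil
    have hi : l.idxOf (l.foldr max 0) < l.length :=
      List.idxOf_lt_length_iff.2 (foldr_max_mem hne)
    have hdec := decomp l hne
    cases k with
    | zero =>
      simp only [Nat.le_zero] at hk
      match l, hk with
      | [x], _ => simp
    | succ j =>
      rw [Function.iterate_succ_apply, ss_eq l hne, List.append_assoc,
          ← List.append_assoc]
      set u := ss (l.take (l.idxOf (l.foldr max 0)))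
        ++ ss (l.drop (l.idxOf (l.foldr max 0) + 1)) with hu
      have hperm : List.Perm u
          (l.take (l.idxOf (l.foldr max 0)) ++ l.drop (l.idxOf (l.foldr max 0) + 1)) :=
        (ss_perm' _).append (ss_perm' _)
      have hndl : (l.take (l.idxOf (l.foldr max 0))
          ++ l.foldr max 0 :: l.drop (l.idxOf (l.foldr max 0) + 1)).Nodup := hdec ▸ hnd
      rw [List.nodup_append'] at hndl
      have hmem : ∀ x ∈ u, x < l.foldr max 0 := by
        intro x hx
        have hx' := hperm.mem_iff.1 hx
        rw [List.mem_append] at hx'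
        have hxl : x ∈ l := by
          rw [hdec, List.mem_append]
          rcases hx' with h | h
          · exact Or.inl h
          · exact Or.inr (List.mem_cons_of_mem _ h)
        have hle : x ≤ l.foldr max 0 := le_foldr_max hxl
        have hneq : x ≠ l.foldr max 0 := by
          rintro rfl
          rcases hx' with h | h
          · exact hndl.2.2 h (List.mem_cons_self)
          · exact (List.nodup_cons.1 hndl.2.1).1 h
        omega
      rw [ss_iter_append_max j u hmem]
      have hulen : u.length = l.length - 1 := by
        have := hperm.length_eq
        simp only [List.length_append, List.length_take, List.length_drop] at this
        omega
      have husorted : (ss^[j] u).Pairwise (· ≤ ·) := by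
        refine IH u (by omega) (hperm.nodup_iff.2 ?_) j (by omega)
        exact (List.Nodup.append hndl.1 (List.nodup_cons.1 hndl.2.1).2
          (fun {x} hx hx' => hndl.2.2 hx (List.mem_cons_of_mem _ hx')))
      rw [List.pairwise_append]
      refine ⟨husorted, List.pairwise_singleton _ _, ?_⟩
      intro a ha b hb
      rw [List.mem_singleton] at hb
      subst hb
      exact le_of_lt (hmem a ((ss_iterate_perm j u).mem_iff.1 ha))

/-- The one-line notation of a permutation of `Fin n`, as a word with letters in
`{1, …, n}`: the letter at position `i` (0-indexed) is `w(i) + 1`. -/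
def oneLine {n : ℕ} (w : Equiv.Perm (Fin n)) : List ℕ :=
  List.ofFn fun i => ((w i : ℕ) + 1)

/-- For every `σ ∈ Sₙ`, applying West's stack-sorting map `n - 1` times to `σ`
yields the identity permutation `1 2 ⋯ n`. -/
theorem stmt8 (n : ℕ) (σ : Equiv.Perm (Fin n)) :
    ss^[n - 1] (oneLine σ) = (List.range n).map (· + 1) := by
  have hlen : (oneLine σ).length = n := by simp [oneLine]
  have hnd : (oneLine σ).Nodup := by
    rw [oneLine, List.nodup_ofFn]
    intro i j hij
    have h' : ((σ i : ℕ) + 1) = ((σ j : ℕ) + 1) := hij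
    exact σ.injective (Fin.ext (by omega))
  have hsorted : (ss^[n - 1] (oneLine σ)).Pairwise (· ≤ ·) :=
    main_sorted (oneLine σ).length _ le_rfl hnd (n - 1) (by omega)
  have htsorted : ((List.range n).map (· + 1)).Pairwise (· ≤ ·) := by
    rw [List.pairwise_map]
    exact List.pairwise_le_range.imp (by omega)
  have hperm0 : (oneLine σ).Perm ((List.range n).map (· + 1)) := by
    apply List.perm_of_nodup_nodup_toFinset_eq hnd
    · exact (List.nodup_range (n := n)).map (fun a b => by omega)
    · ext x
      simp only [List.mem_toFinset, oneLine, List.mem_ofFn, Set.mem_range, List.mem_map,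
        List.mem_range]
      constructor
      · rintro ⟨i, rfl⟩
        exact ⟨σ i, (σ i).2, rfl⟩
      · rintro ⟨j, hj, rfl⟩
        exact ⟨σ.symm ⟨j, hj⟩, by simp⟩
  have hperm : (ss^[n - 1] (oneLine σ)).Perm ((List.range n).map (· + 1)) :=
    (ss_iterate_perm _ _).trans hperm0
  exact List.Perm.eq_of_pairwise' hsorted htsorted hperm
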